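/- Let G be the group with presentation ⟨σ, τ, φ | σ^3 = τ^4 = φ^2 = 1, σφ = φσ, φτφ = τ^{-1}, τστ^{-1} = σ^{-1}⟩ (isomorphic to C_3 ⋊ D_4, of order 24), and let ρ be a faithful irreducible 2-dimensional complex representation of G. Then trace ρ(1) = 2, trace ρ(τ^2) = -2, trace ρ(φ) = 0, trace ρ(τφ) = 0, trace ρ(σ) = -1, trace ρ(τ) = 0, trace ρ(στ^2) = 1, and the trace of ρ(σφ) satisfies (trace ρ(σφ))^2 = -3, with trace ρ(σ^2·φ) = -trace ρ(σφ). -/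
import Mathlib

set_option linter.unusedTactic false
set_option maxHeartbeats 1000000


/-- Relators for the presentation
`⟨σ, τ, φ | σ³ = τ⁴ = φ² = 1, σφ = φσ, φτφ = τ⁻¹, τστ⁻¹ = σ⁻¹⟩`,
with `σ, τ, φ` the generators indexed by `0, 1, 2` respectively. -/
def g1Rels : Set (FreeGroup (Fin 3)) :=
  {FreeGroup.of 0 ^ 3, FreeGroup.of 1 ^ 4, FreeGroup.of 2 ^ 2,
    FreeGroup.of 0 * FreeGroup.of 2 * (FreeGroup.of 0)⁻¹ * (FreeGroup.of 2)⁻¹,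
    FreeGroup.of 2 * FreeGroup.of 1 * FreeGroup.of 2 * FreeGroup.of 1,
    FreeGroup.of 1 * FreeGroup.of 0 * (FreeGroup.of 1)⁻¹ * FreeGroup.of 0}

/-- The group `G = ⟨σ, τ, φ | σ³ = τ⁴ = φ² = 1, σφ = φσ, φτφ = τ⁻¹, τστ⁻¹ = σ⁻¹⟩`,
isomorphic to `C₃ ⋊ D₄` of order 24. -/
def G1 : Type := PresentedGroup g1Rels

noncomputable instance : Group G1 := by unfold G1; infer_instance

/-- `σ` in `G1`. -/
def G1.σ : G1 := PresentedGroup.of 0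

/-- `τ` in `G1`. -/
def G1.τ : G1 := PresentedGroup.of 1

/-- `φ` in `G1`. -/
def G1.φ : G1 := PresentedGroup.of 2



namespace G1aux

theorem rel_one {r : FreeGroup (Fin 3)} (h : r ∈ g1Rels) :
    (PresentedGroup.mk g1Rels r : G1) = 1 :=
  (QuotientGroup.eq_one_iff _).mpr (Subgroup.subset_normalClosure h)

theorem hσ3 : G1.σ ^ 3 = 1 := by
  have := rel_one (show FreeGroup.of 0 ^ 3 ∈ g1Rels by simp [g1Rels])
  rw [map_pow] at this; exact this

theorem hτ4 : G1.τ ^ 4 = 1 := by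
  have := rel_one (show FreeGroup.of 1 ^ 4 ∈ g1Rels by simp [g1Rels])
  rw [map_pow] at this; exact this

theorem hφ2 : G1.φ ^ 2 = 1 := by
  have := rel_one (show FreeGroup.of 2 ^ 2 ∈ g1Rels by simp [g1Rels])
  rw [map_pow] at this; exact this

theorem hσφrel : G1.σ * G1.φ * G1.σ⁻¹ * G1.φ⁻¹ = 1 := by
  have := rel_one (show FreeGroup.of 0 * FreeGroup.of 2 * (FreeGroup.of 0)⁻¹ * (FreeGroup.of 2)⁻¹
    ∈ g1Rels by simp [g1Rels])
  simp only [map_mul, map_inv] at this; exact this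

theorem hφτφτ : G1.φ * G1.τ * G1.φ * G1.τ = 1 := by
  have := rel_one (show FreeGroup.of 2 * FreeGroup.of 1 * FreeGroup.of 2 * FreeGroup.of 1
    ∈ g1Rels by simp [g1Rels])
  simp only [map_mul] at this; exact this

theorem hτστσ : G1.τ * G1.σ * G1.τ⁻¹ * G1.σ = 1 := by
  have := rel_one (show FreeGroup.of 1 * FreeGroup.of 0 * (FreeGroup.of 1)⁻¹ * FreeGroup.of 0
    ∈ g1Rels by simp [g1Rels])
  simp only [map_mul, map_inv] at this; exact this

theorem hσφ : G1.σ * G1.φ = G1.φ * G1.σ := by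
  have h := hσφrel
  calc G1.σ * G1.φ = (G1.σ * G1.φ * G1.σ⁻¹ * G1.φ⁻¹) * (G1.φ * G1.σ) := by group
    _ = G1.φ * G1.σ := by rw [h]; group

theorem hτστ : G1.τ * G1.σ * G1.τ⁻¹ = G1.σ⁻¹ := by
  have h := hτστσ
  calc G1.τ * G1.σ * G1.τ⁻¹ = (G1.τ * G1.σ * G1.τ⁻¹ * G1.σ) * G1.σ⁻¹ := by group
    _ = G1.σ⁻¹ := by rw [h]; group

theorem hφτφ : G1.φ * G1.τ * G1.φ = G1.τ⁻¹ := by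
  have h := hφτφτ
  calc G1.φ * G1.τ * G1.φ = (G1.φ * G1.τ * G1.φ * G1.τ) * G1.τ⁻¹ := by group
    _ = G1.τ⁻¹ := by rw [h]; group

theorem hφinv : G1.φ⁻¹ = G1.φ := inv_eq_of_mul_eq_one_right (by rw [← pow_two]; exact hφ2)

theorem hτinv : G1.τ⁻¹ = G1.τ ^ 3 :=
  inv_eq_of_mul_eq_one_right (by rw [← pow_succ']; exact hτ4)

theorem hφτφ' : G1.φ * G1.τ * G1.φ⁻¹ = G1.τ ^ 3 := by rw [hφinv, hφτφ, hτinv]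

theorem comm_τ2_σ : G1.τ ^ 2 * G1.σ = G1.σ * G1.τ ^ 2 := by
  have h1 : G1.τ * G1.σ = G1.σ⁻¹ * G1.τ := by
    calc G1.τ * G1.σ = (G1.τ * G1.σ * G1.τ⁻¹) * G1.τ := by group
      _ = G1.σ⁻¹ * G1.τ := by rw [hτστ]
  have h2 : G1.τ * G1.σ⁻¹ = G1.σ * G1.τ := by
    calc G1.τ * G1.σ⁻¹ = (G1.τ * G1.σ * G1.τ⁻¹)⁻¹ * G1.τ := by group
      _ = G1.σ * G1.τ := by rw [hτστ]; group
  calc G1.τ ^ 2 * G1.σ = G1.τ * (G1.τ * G1.σ) := by rw [pow_two]; group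
    _ = G1.τ * G1.σ⁻¹ * G1.τ := by rw [h1]; group
    _ = G1.σ * G1.τ * G1.τ := by rw [h2]
    _ = G1.σ * G1.τ ^ 2 := by rw [pow_two]; group

theorem comm_τ2_φ : G1.τ ^ 2 * G1.φ = G1.φ * G1.τ ^ 2 := by
  have h1 : G1.φ * G1.τ ^ 2 * G1.φ⁻¹ = G1.τ ^ 6 := by
    have : (6 : ℕ) = 3 + 3 := rfl
    rw [this, pow_add, pow_two, ← hφτφ']
    group
  have h2 : G1.τ ^ 6 = G1.τ ^ 2 := by
    have : (6 : ℕ) = 4 + 2 := rfl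
    rw [this, pow_add, hτ4, one_mul]
  have h3 : G1.φ * G1.τ ^ 2 = G1.τ ^ 2 * G1.φ := by
    calc G1.φ * G1.τ ^ 2 = (G1.φ * G1.τ ^ 2 * G1.φ⁻¹) * G1.φ := by group
      _ = G1.τ ^ 2 * G1.φ := by rw [h1, h2]
  exact h3.symm

theorem comm_τ2_τ : G1.τ ^ 2 * G1.τ = G1.τ * G1.τ ^ 2 := by
  rw [pow_two]; group

theorem central_τ2 (g : G1) : G1.τ ^ 2 * g = g * G1.τ ^ 2 := by
  have key : ∀ j : Fin 3, (PresentedGroup.of j : G1) ∈ Subgroup.centralizer {G1.τ ^ 2} := by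
    intro j
    fin_cases j
    · exact Subgroup.mem_centralizer_iff.mpr (by rintro h rfl; exact comm_τ2_σ)
    · exact Subgroup.mem_centralizer_iff.mpr (by rintro h rfl; exact comm_τ2_τ)
    · exact Subgroup.mem_centralizer_iff.mpr (by rintro h rfl; exact comm_τ2_φ)
  have hg := PresentedGroup.generated_by g1Rels (Subgroup.centralizer {G1.τ ^ 2}) key g
  exact (Subgroup.mem_centralizer_iff.mp hg _ rfl)

theorem hτφ2 : (G1.τ * G1.φ) * (G1.τ * G1.φ) = 1 := by
  calc (G1.τ * G1.φ) * (G1.τ * G1.φ) = G1.τ * (G1.φ * G1.τ * G1.φ) := by group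
    _ = 1 := by rw [hφτφ]; group

theorem hσφ2 : (G1.σ * G1.φ) * (G1.σ * G1.φ) = G1.σ ^ 2 := by
  calc (G1.σ * G1.φ) * (G1.σ * G1.φ) = G1.σ * (G1.φ * G1.σ) * G1.φ := by group
    _ = G1.σ * (G1.σ * G1.φ) * G1.φ := by rw [← hσφ]
    _ = (G1.σ * G1.σ) * (G1.φ * G1.φ) := by group
    _ = G1.σ ^ 2 * G1.φ ^ 2 := by rw [pow_two, pow_two]
    _ = G1.σ ^ 2 := by rw [hφ2, mul_one]

theorem hφτφ'' : G1.φ * G1.τ * G1.φ⁻¹ = G1.τ * G1.τ ^ 2 := by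
  rw [hφτφ', pow_succ']

def permOf : Fin 3 → Equiv.Perm (Fin 7) := ![c[0, 1, 2], c[1, 2] * c[3, 4, 5, 6], c[4, 6]]

theorem permOf_rels : ∀ r ∈ g1Rels, FreeGroup.lift permOf r = 1 := by
  intro r hr
  simp only [g1Rels, Set.mem_insert_iff, Set.mem_singleton_iff] at hr
  rcases hr with h | h | h | h | h | h <;> subst h <;>
    simp only [map_mul, map_pow, map_inv, FreeGroup.lift_apply_of] <;> decide

noncomputable def ψ : G1 →* Equiv.Perm (Fin 7) := PresentedGroup.toGroup permOf_rels

theorem ψσ : ψ G1.σ = c[0, 1, 2] := PresentedGroup.toGroup.of permOf_rels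
theorem ψτ : ψ G1.τ = c[1, 2] * c[3, 4, 5, 6] := PresentedGroup.toGroup.of permOf_rels
theorem ψφ : ψ G1.φ = c[4, 6] := PresentedGroup.toGroup.of permOf_rels

theorem σ_ne_one : G1.σ ≠ 1 := fun h => by
  have := congrArg ψ h; rw [ψσ, map_one] at this; exact absurd this (by decide)
theorem τsq_ne_one : G1.τ ^ 2 ≠ 1 := fun h => by
  have := congrArg ψ h; rw [map_pow, ψτ, map_one] at this; exact absurd this (by decide)
theorem φ_ne_one : G1.φ ≠ 1 := fun h => by
  have := congrArg ψ h; rw [ψφ, map_one] at this; exact absurd this (by decide)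
theorem φ_ne_τsq : G1.φ ≠ G1.τ ^ 2 := fun h => by
  have := congrArg ψ h; rw [map_pow, ψτ, ψφ] at this; exact absurd this (by decide)
theorem τφ_ne_one : G1.τ * G1.φ ≠ 1 := fun h => by
  have := congrArg ψ h; rw [map_mul, ψτ, ψφ, map_one] at this; exact absurd this (by decide)
theorem τφ_ne_τsq : G1.τ * G1.φ ≠ G1.τ ^ 2 := fun h => by
  have := congrArg ψ h; rw [map_mul, map_pow, ψτ, ψφ] at this; exact absurd this (by decide)

theorem σ_comm_τ_false (h : G1.σ * G1.τ = G1.τ * G1.σ) : False := by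
  have h1 : G1.τ * G1.σ * G1.τ⁻¹ = G1.σ := by rw [← h]; group
  have h2 : G1.σ = G1.σ⁻¹ := h1.symm.trans hτστ
  have h3 : G1.σ * G1.σ = 1 := by
    calc G1.σ * G1.σ = G1.σ⁻¹ * G1.σ := by rw [← h2]
      _ = 1 := by group
  have h4 : G1.σ = 1 := by
    have h5 : G1.σ ^ 3 = G1.σ * (G1.σ * G1.σ) := by rw [pow_succ, pow_two]; group
    rw [hσ3, h3, mul_one] at h5; exact h5.symm
  exact σ_ne_one h4

end G1aux

namespace G1aux

theorem e1 : G1.σ * G1.σ * G1.σ = 1 := by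
  have h : G1.σ ^ 3 = G1.σ * G1.σ * G1.σ := by rw [pow_succ, pow_two]
  rw [← h]; exact hσ3

theorem e2 : G1.φ * G1.φ = 1 := by rw [← pow_two]; exact hφ2

theorem e3 : G1.τ ^ 2 * G1.τ ^ 2 = 1 := by rw [← pow_add]; exact hτ4

theorem e5 : (G1.σ * G1.φ) * (G1.σ * G1.φ) = G1.σ * G1.σ := by
  rw [hσφ2, pow_two]

theorem e6 : G1.τ * G1.σ * G1.τ⁻¹ = G1.σ * G1.σ :=
  hτστ.trans (inv_eq_of_mul_eq_one_right (by rw [← mul_assoc]; exact e1))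

theorem e7 : G1.φ * G1.τ * G1.φ⁻¹ = G1.τ * G1.τ ^ 2 := by
  rw [hφτφ', pow_succ']

theorem e8 : G1.σ ^ 2 * G1.φ = G1.σ * G1.σ * G1.φ := by rw [pow_two]

end G1aux

section MatrixLemmas

theorem ch2 (A : Matrix (Fin 2) (Fin 2) ℂ) :
    A * A = A.trace • A - A.det • (1 : Matrix (Fin 2) (Fin 2) ℂ) := by
  ext i j
  fin_cases i <;> fin_cases j <;>
    simp [Matrix.mul_apply, Fin.sum_univ_two, Matrix.trace, Matrix.det_fin_two,
      Matrix.one_apply, Matrix.diag] <;> ring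

theorem trace2_eq (A : Matrix (Fin 2) (Fin 2) ℂ) :
    (A * A).trace = A.trace * A.trace - 2 * A.det := by
  rw [ch2]
  rw [Matrix.trace_sub, Matrix.trace_smul, Matrix.trace_smul, Matrix.trace_one]
  simp [Fintype.card_fin]
  ring

theorem smul_one_inj {k l : ℂ}
    (h : k • (1 : Matrix (Fin 2) (Fin 2) ℂ) = l • 1) : k = l := by
  have := congrFun (congrFun h 0) 0
  simpa using this

theorem eq_smul_one {k l : ℂ} {A : Matrix (Fin 2) (Fin 2) ℂ} (hk : k ≠ 0)
    (h : k • A = l • 1) : A = (l / k) • 1 := by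
  rw [← inv_smul_smul₀ hk A, h, smul_smul, div_eq_inv_mul]

end MatrixLemmas


open G1aux

/-- Let `G = ⟨σ, τ, φ | σ³ = τ⁴ = φ² = 1, σφ = φσ, φτφ = τ⁻¹, τστ⁻¹ = σ⁻¹⟩`
(isomorphic to `C₃ ⋊ D₄`, of order 24) and let `ρ` be a faithful irreducible
2-dimensional complex representation of `G`. Then `tr ρ(1) = 2`,
`tr ρ(τ²) = -2`, `tr ρ(φ) = 0`, `tr ρ(τφ) = 0`, `tr ρ(σ) = -1`, `tr ρ(τ) = 0`,
`tr ρ(στ²) = 1`, `(tr ρ(σφ))² = -3` and `tr ρ(σ²φ) = -tr ρ(σφ)`. -/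
theorem c3rd4_faithful_irreducible_two_dim_rep_character
    (ρ : Representation ℂ G1 (Fin 2 → ℂ))
    (hfaithful : Function.Injective ρ)
    (hirred : ∀ p : Submodule ℂ (Fin 2 → ℂ),
      (∀ g : G1, ∀ x ∈ p, ρ g x ∈ p) → p = ⊥ ∨ p = ⊤) :
    LinearMap.trace ℂ _ (ρ 1) = 2 ∧
    LinearMap.trace ℂ _ (ρ (G1.τ ^ 2)) = -2 ∧
    LinearMap.trace ℂ _ (ρ G1.φ) = 0 ∧
    LinearMap.trace ℂ _ (ρ (G1.τ * G1.φ)) = 0 ∧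
    LinearMap.trace ℂ _ (ρ G1.σ) = -1 ∧
    LinearMap.trace ℂ _ (ρ G1.τ) = 0 ∧
    LinearMap.trace ℂ _ (ρ (G1.σ * G1.τ ^ 2)) = 1 ∧
    (LinearMap.trace ℂ _ (ρ (G1.σ * G1.φ))) ^ 2 = -3 ∧
    LinearMap.trace ℂ _ (ρ (G1.σ ^ 2 * G1.φ))
      = -LinearMap.trace ℂ _ (ρ (G1.σ * G1.φ)) := by
  classical
  set b := Pi.basisFun ℂ (Fin 2) with hb
  set M : G1 → Matrix (Fin 2) (Fin 2) ℂ := fun g => LinearMap.toMatrix b b (ρ g) with hM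
  have hMmul : ∀ g h : G1, M (g * h) = M g * M h := by
    intro g h
    simp only [hM, map_mul ρ, LinearMap.toMatrix_mul]
  have hM1 : M 1 = 1 := by
    simp only [hM, map_one ρ]
    exact LinearMap.toMatrix_one b
  have htr : ∀ g : G1, LinearMap.trace ℂ _ (ρ g) = (M g).trace := fun g =>
    LinearMap.trace_eq_matrix_trace ℂ b _
  have hinj : ∀ g h : G1, M g = M h → g = h := by
    intro g h e
    exact hfaithful ((LinearMap.toMatrix b b).injective e)
  -- trace of identity
  have goal1 : LinearMap.trace ℂ _ (ρ (1 : G1)) = 2 := by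
    rw [htr, hM1, Matrix.trace_one]
    simp
  -- Schur: ρ (τ²) is scalar
  have hcomm : ∀ g : G1, ρ (G1.τ ^ 2) * ρ g = ρ g * ρ (G1.τ ^ 2) := by
    intro g
    rw [← map_mul, ← map_mul, central_τ2]
  obtain ⟨c, hc⟩ := Module.End.exists_eigenvalue (ρ (G1.τ ^ 2))
  obtain ⟨v, hv⟩ := hc.exists_hasEigenvector
  have hinv : ∀ g : G1, ∀ x ∈ Module.End.eigenspace (ρ (G1.τ ^ 2)) c,
      ρ g x ∈ Module.End.eigenspace (ρ (G1.τ ^ 2)) c := by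
    intro g x hx
    rw [Module.End.mem_eigenspace_iff] at hx ⊢
    calc ρ (G1.τ ^ 2) (ρ g x) = (ρ (G1.τ ^ 2) * ρ g) x := rfl
      _ = (ρ g * ρ (G1.τ ^ 2)) x := by rw [hcomm]
      _ = ρ g (ρ (G1.τ ^ 2) x) := rfl
      _ = ρ g (c • x) := by rw [hx]
      _ = c • ρ g x := map_smul _ _ _
  have htop : Module.End.eigenspace (ρ (G1.τ ^ 2)) c = ⊤ := by
    rcases hirred _ hinv with hbot | htop
    · exact absurd hbot hc
    · exact htop
  have hscal : ρ (G1.τ ^ 2) = c • (1 : Module.End ℂ (Fin 2 → ℂ)) := by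
    apply LinearMap.ext
    intro x
    have hx : x ∈ Module.End.eigenspace (ρ (G1.τ ^ 2)) c := htop ▸ Submodule.mem_top
    rw [Module.End.mem_eigenspace_iff] at hx
    simpa using hx
  have hMτ2 : M (G1.τ ^ 2) = c • 1 := by
    simp only [hM, hscal]
    rw [map_smul]
    congr 1
    exact LinearMap.toMatrix_one b
  -- c = -1
  have hc2 : c * c = 1 := by
    have h4 : M (G1.τ ^ 2) * M (G1.τ ^ 2) = 1 := by
      rw [← hMmul, e3, hM1]
    rw [hMτ2] at h4
    have h5 : (c * c) • (1 : Matrix (Fin 2) (Fin 2) ℂ) = (1 : ℂ) • 1 := by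
      rw [one_smul]
      calc (c * c) • (1 : Matrix (Fin 2) (Fin 2) ℂ) = (c • 1) * (c • 1) := by
            rw [smul_mul_assoc, mul_smul_comm, one_mul, smul_smul]
        _ = 1 := h4
    exact smul_one_inj h5
  have hcne : c ≠ 1 := by
    intro h1
    apply τsq_ne_one
    apply hinj
    rw [hMτ2, h1, one_smul, hM1]
  have hcm1 : c = -1 := by
    have : (c - 1) * (c + 1) = 0 := by linear_combination hc2
    rcases mul_eq_zero.mp this with h | h
    · exact absurd (by linear_combination h) hcne
    · linear_combination h
  have goal2 : LinearMap.trace ℂ _ (ρ (G1.τ ^ 2)) = -2 := by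
    rw [htr, hMτ2, hcm1, Matrix.trace_smul, Matrix.trace_one]
    simp

  -- trace is conjugation invariant
  have htrconj : ∀ g h : G1, (M (g * h * g⁻¹)).trace = (M h).trace := by
    intro g h
    calc (M (g * h * g⁻¹)).trace = (M (g * h) * M g⁻¹).trace := by rw [hMmul (g * h) g⁻¹]
      _ = (M g⁻¹ * M (g * h)).trace := Matrix.trace_mul_comm _ _
      _ = (M (g⁻¹ * (g * h))).trace := by rw [hMmul g⁻¹ (g * h)]
      _ = (M h).trace := by rw [inv_mul_cancel_left]
  -- ρ σ is not scalar
  have hAnotscal : ∀ z : ℂ, M G1.σ ≠ z • 1 := by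
    intro z hz
    apply σ_comm_τ_false
    apply hinj
    rw [hMmul, hMmul, hz, smul_mul_assoc, one_mul, mul_smul_comm, mul_one]
  -- analysis of A = M σ
  have hA3 : M G1.σ * M G1.σ * M G1.σ = 1 := by rw [← hMmul, ← hMmul, e1, hM1]
  have keyA : ((M G1.σ).trace * (M G1.σ).trace - (M G1.σ).det) • M G1.σ
      = (1 + (M G1.σ).trace * (M G1.σ).det) • (1 : Matrix (Fin 2) (Fin 2) ℂ) := by
    have h := hA3
    rw [ch2 (M G1.σ), sub_mul, smul_mul_assoc, smul_mul_assoc, one_mul,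
      ch2 (M G1.σ), smul_sub, smul_smul, smul_smul] at h
    rw [sub_sub, sub_eq_iff_eq_add] at h
    rw [sub_smul, add_smul, one_smul, h]
    abel
  have hAeqs : (M G1.σ).trace * (M G1.σ).trace - (M G1.σ).det = 0 ∧
      1 + (M G1.σ).trace * (M G1.σ).det = 0 := by
    rcases eq_or_ne ((M G1.σ).trace * (M G1.σ).trace - (M G1.σ).det) 0 with h0 | h0
    · refine ⟨h0, ?_⟩
      have h1 : (1 + (M G1.σ).trace * (M G1.σ).det) • (1 : Matrix (Fin 2) (Fin 2) ℂ)
          = (0 : ℂ) • 1 := by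
        rw [← keyA, h0, zero_smul, zero_smul]
      exact smul_one_inj h1
    · exact absurd (eq_smul_one h0 keyA) (hAnotscal _)
  have htrA2 : (M G1.σ * M G1.σ).trace = (M G1.σ).trace := by
    have h := htrconj G1.τ G1.σ
    rw [e6, hMmul] at h
    exact h
  have h3A : (M G1.σ).trace * (M G1.σ).trace - 2 * (M G1.σ).det = (M G1.σ).trace := by
    rw [← trace2_eq, htrA2]
  have hdA : (M G1.σ).det = -(M G1.σ).trace := by
    linear_combination hAeqs.1 - h3A
  have ha : (M G1.σ).trace = -1 := by
    have h2' : 1 - (M G1.σ).trace * (M G1.σ).trace = 0 := by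
      linear_combination hAeqs.2 - (M G1.σ).trace * hdA
    have ha2 : (M G1.σ).trace * (M G1.σ).trace + (M G1.σ).trace = 0 := by
      linear_combination hAeqs.1 + hdA
    linear_combination ha2 + h2'
  have hdA1 : (M G1.σ).det = 1 := by rw [hdA, ha]; ring
  have goal5 : LinearMap.trace ℂ _ (ρ G1.σ) = -1 := by rw [htr]; exact ha
  -- goal στ²
  have goal7 : LinearMap.trace ℂ _ (ρ (G1.σ * G1.τ ^ 2)) = 1 := by
    rw [htr, hMmul, hMτ2, hcm1, mul_smul_comm, mul_one, Matrix.trace_smul, smul_eq_mul, ha]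
    ring
  -- involution analysis
  have hsq : ∀ g : G1, M g * M g = 1 → g ≠ 1 → g ≠ G1.τ ^ 2 →
      (M g).trace = 0 ∧ (M g).det = -1 := by
    intro g hgg hg1 hg2
    have key : (M g).trace • M g = (1 + (M g).det) • (1 : Matrix (Fin 2) (Fin 2) ℂ) := by
      have h := ch2 (M g)
      rw [hgg, eq_comm, sub_eq_iff_eq_add] at h
      rw [add_smul, one_smul, ← h]
    have ht0 : (M g).trace = 0 := by
      by_contra ht
      have hgz := eq_smul_one ht key
      have hz2 : ((1 + (M g).det) / (M g).trace) * ((1 + (M g).det) / (M g).trace) = 1 := by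
        apply smul_one_inj
        rw [one_smul]
        calc (((1 + (M g).det) / (M g).trace) * ((1 + (M g).det) / (M g).trace)) •
              (1 : Matrix (Fin 2) (Fin 2) ℂ)
            = (((1 + (M g).det) / (M g).trace) • 1) * (((1 + (M g).det) / (M g).trace) • 1) := by
              rw [smul_mul_assoc, mul_smul_comm, one_mul, smul_smul]
          _ = M g * M g := by rw [← hgz]
          _ = 1 := hgg
      rcases mul_self_eq_one_iff.mp hz2 with h | h
      · apply hg1
        apply hinj
        rw [hgz, h, one_smul, hM1]
      · apply hg2
        apply hinj
        rw [hgz, h, hMτ2, hcm1]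
    refine ⟨ht0, ?_⟩
    have h1 : (0 : ℂ) • (1 : Matrix (Fin 2) (Fin 2) ℂ) = (1 + (M g).det) • 1 := by
      rw [← key, ht0, zero_smul, zero_smul]
    have h2 := smul_one_inj h1
    linear_combination -h2
  have hφsq := hsq G1.φ (by rw [← hMmul, e2, hM1]) φ_ne_one φ_ne_τsq
  have hτφsq := hsq (G1.τ * G1.φ) (by rw [← hMmul, hτφ2, hM1]) τφ_ne_one τφ_ne_τsq
  have goal3 : LinearMap.trace ℂ _ (ρ G1.φ) = 0 := by rw [htr]; exact hφsq.1
  have goal4 : LinearMap.trace ℂ _ (ρ (G1.τ * G1.φ)) = 0 := by rw [htr]; exact hτφsq.1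
  -- trace of τ
  have goal6 : LinearMap.trace ℂ _ (ρ G1.τ) = 0 := by
    rw [htr]
    have h := htrconj G1.φ G1.τ
    rw [e7, hMmul, hMτ2, hcm1, mul_smul_comm, mul_one, Matrix.trace_smul, smul_eq_mul] at h
    linear_combination -h / 2
  -- trace of σφ
  have hTT : M (G1.σ * G1.φ) * M (G1.σ * G1.φ) = M G1.σ * M G1.σ := by
    rw [← hMmul, e5, hMmul]
  have hdT : (M (G1.σ * G1.φ)).det = -1 := by
    rw [hMmul, Matrix.det_mul, hdA1, hφsq.2]
    ring
  have goal8 : (LinearMap.trace ℂ _ (ρ (G1.σ * G1.φ))) ^ 2 = -3 := by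
    rw [htr, pow_two]
    have h1 := trace2_eq (M (G1.σ * G1.φ))
    rw [hTT, htrA2, ha, hdT] at h1
    linear_combination -h1
  -- trace of σ²φ
  have goal9 : LinearMap.trace ℂ _ (ρ (G1.σ ^ 2 * G1.φ))
      = -LinearMap.trace ℂ _ (ρ (G1.σ * G1.φ)) := by
    rw [htr, htr]
    have h1 : M (G1.σ ^ 2 * G1.φ) = (M G1.σ * M G1.σ) * M G1.φ := by
      rw [e8, hMmul, hMmul]
    rw [h1, ch2 (M G1.σ), sub_mul, smul_mul_assoc, smul_mul_assoc, one_mul,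
      Matrix.trace_sub, Matrix.trace_smul, Matrix.trace_smul, smul_eq_mul, smul_eq_mul,
      ← hMmul, ha, hdA1, hφsq.1]
    ring
  exact ⟨goal1, goal2, goal3, goal4, goal5, goal6, goal7, goal8, goal9⟩
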